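/- If x ∈ {0,1}^∞ and μ_x is the stationary measure with μ_x(x_{1..n}) ≥ π(1)/(n+1)^2 for all n (π(1) > 0 fixed), then μ_x predicts δ_x in the almost-sure pointwise sense: the conditional probabilities μ_x(x_{n+1} | x_{1..n}) need not converge to 1, but (1/n)·(−log μ_x(x_{1..n})) → 0 as n → ∞. -/

import Mathlib

/-! Cylinder probabilities never exceed `1`, so
`0 ≤ -log μ(x_{1..n}) ≤ 2 log (n + 1) - log π(1)` for every `n`,
and dividing by `n` squeezes the rate to `0` because `log (n + 1) / n → 0`. -/

open Filter Topology

/-- A time-series distribution on `{0,1}^∞`, given by its cylinder probabilities. -/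
structure TSD where
  p : List Bool → ℝ
  nonneg : ∀ w, 0 ≤ p w
  empty_one : p [] = 1
  additive : ∀ w, p w = p (w ++ [false]) + p (w ++ [true])

/-- Stationarity of a time-series distribution, expressed on cylinder
probabilities: the shifted distribution coincides with the original one. -/
def StationaryTSD (μ : TSD) : Prop :=
  ∀ w : List Bool, μ.p w = μ.p (false :: w) + μ.p (true :: w)

/-- The prefix `x_1 … x_n` of an infinite binary sequence. -/
def pref (x : ℕ → Bool) (n : ℕ) : List Bool := (List.range n).map x

namespace TSD

theorem p_append_singleton_le (μ : TSD) (w : List Bool) (b : Bool) :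
    μ.p (w ++ [b]) ≤ μ.p w := by
  have hfalse := μ.nonneg (w ++ [false])
  have htrue := μ.nonneg (w ++ [true])
  cases b <;> linarith [μ.additive w]

theorem p_le_one (μ : TSD) (w : List Bool) : μ.p w ≤ 1 := by
  induction w using List.reverseRecOn with
  | nil => exact μ.empty_one.le
  | append_singleton w b ih => exact (μ.p_append_singleton_le w b).trans ih

end TSD

theorem tendsto_logb_natCast_add_one_div (b : ℝ) :
    Tendsto (fun n : ℕ => Real.logb b ((n : ℝ) + 1) / n) atTop (𝓝 0) := by
  have hlog : Tendsto (fun n : ℕ => Real.log ((n : ℝ) + 1) / n) atTop (𝓝 0) := by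
    -- `log y / (y - 1)` evaluated at `y = n + 1`
    refine ((Real.tendsto_pow_log_div_mul_add_atTop 1 (-1) 1 one_ne_zero).comp
      (tendsto_atTop_add_const_right atTop 1 tendsto_natCast_atTop_atTop)).congr fun n => ?_
    simp
  simpa [Real.logb, div_right_comm] using hlog.div_const (Real.log b)

theorem tendsto_neg_logb_div_of_inv_poly_le {b c : ℝ} (hb : 1 < b) (hc : 0 < c) (k : ℕ)
    {a : ℕ → ℝ} (hlow : ∀ n : ℕ, c / ((n : ℝ) + 1) ^ k ≤ a n) (hup : ∀ n, a n ≤ 1) :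
    Tendsto (fun n : ℕ => -Real.logb b (a n) / n) atTop (𝓝 0) := by
  have hbound : Tendsto (fun n : ℕ => (k * Real.logb b ((n : ℝ) + 1) - Real.logb b c) / n)
      atTop (𝓝 0) := by
    simpa [sub_div, mul_div_assoc] using
      ((tendsto_logb_natCast_add_one_div b).const_mul (k : ℝ)).sub
        (tendsto_const_div_atTop_nhds_zero_nat (Real.logb b c))
  refine tendsto_of_tendsto_of_tendsto_of_le_of_le tendsto_const_nhds hbound
    (fun n => ?_) (fun n => ?_)
  · have hlow_pos : 0 < c / ((n : ℝ) + 1) ^ k := by positivity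
    have hlog_nonpos := Real.logb_nonpos hb (hlow_pos.le.trans (hlow n)) (hup n)
    exact div_nonneg (neg_nonneg.mpr hlog_nonpos) n.cast_nonneg
  · refine div_le_div_of_nonneg_right ?_ n.cast_nonneg
    have hmono := Real.logb_le_logb_of_le hb (by positivity) (hlow n)
    rw [Real.logb_div hc.ne' (by positivity), Real.logb_pow] at hmono
    linarith

theorem stmt16_general (x : ℕ → Bool) (μ : TSD)
    (c : ℝ) (hc : 0 < c)
    (h : ∀ n : ℕ, c / ((n : ℝ) + 1)^2 ≤ μ.p (pref x n)) :
    Filter.Tendsto (fun n : ℕ => -Real.logb 2 (μ.p (pref x n)) / (n : ℝ))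
      Filter.atTop (nhds 0) :=
  tendsto_neg_logb_div_of_inv_poly_le one_lt_two hc 2 h fun n => μ.p_le_one (pref x n)

/-- if `μ_x` is stationary and `μ_x(x_{1..n}) ≥ π(1)/(n+1)^2`
for all `n` with a fixed constant `π(1) > 0`, then
`(1/n)(−log₂ μ_x(x_{1..n})) → 0` as `n → ∞`. -/
theorem stmt16 (x : ℕ → Bool) (μ : TSD) (hμ : StationaryTSD μ)
    (c : ℝ) (hc : 0 < c)
    (h : ∀ n : ℕ, c / ((n : ℝ) + 1)^2 ≤ μ.p (pref x n)) :
    Filter.Tendsto (fun n : ℕ => -Real.logb 2 (μ.p (pref x n)) / (n : ℝ))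
      Filter.atTop (nhds 0) :=
  stmt16_general x μ c hc h
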